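/- For the matrix B = [[0,1,0,0],[0,0,1,0],[0,0,0,1],[0,0,0,−1]] (case p = −1), E_{1/2,1}(B) equals the matrix with rows (1, 2/√π, 1, −e·erfc(1) − 2/√π + 2), (0, 1, 2/√π, e·erfc(1) + 2/√π − 1), (0, 0, 1, −e·erfc(1) + 1), (0, 0, 0, e·erfc(1)). -/

import Mathlib

/-!
Since `B⁴ = -B³`, every power `B^(k+3)` equals `(-1)^k B³`, so the series collapses to
`E(B) = I + Γ(3/2)⁻¹ B + B² + (2 - Γ(3/2)⁻¹ - E_{1/2,1}(-1)) B³` with `Γ(3/2)⁻¹ = 2/√π`.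
In the scalar series `E_{1/2,1}(-1) = ∑ (-1)^k / Γ(k/2 + 1)` the even terms `1/m!` sum to `e`, while
integration by parts gives `1/Γ(m + 3/2) = (2/√π) ∫₀¹ (1 - u²)^m / m! du`, so the odd terms sum to
`(2/√π) ∫₀¹ e^{1-u²} du = e (1 - erfc 1)`.
-/

open scoped Real

/-- The matrix Mittag-Leffler function `E_{α,β}(A) = ∑ A^k / Γ(αk+β)`. -/
noncomputable def mittagLefflerMatrix {n : ℕ} (α : ℝ) (β : ℂ)
    (A : Matrix (Fin n) (Fin n) ℂ) : Matrix (Fin n) (Fin n) ℂ :=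
  ∑' k : ℕ, (Complex.Gamma ((α : ℂ) * k + β))⁻¹ • A ^ k

/-- The (real) complementary error function `erfc(x) = (2/√π) ∫_x^∞ e^{-t²} dt`. -/
noncomputable def erfc (x : ℝ) : ℝ :=
  (2 / Real.sqrt π) * ∫ t in Set.Ioi x, Real.exp (-t ^ 2)

open Finset

section PowSuccEqNeg

variable {𝕜 R : Type*} [CommRing 𝕜] [Ring R] [Algebra 𝕜 R] {A : R} {n : ℕ}

theorem pow_add_eq_neg_one_pow_smul (hA : A ^ (n + 1) = -A ^ n) (k : ℕ) :
    A ^ (k + n) = (-1 : 𝕜) ^ k • A ^ n := by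
  induction k with
  | zero => simp
  | succ k ih =>
    rw [add_right_comm, pow_succ, ih, smul_mul_assoc, ← pow_succ, hA, pow_succ, mul_neg_one,
      neg_smul, smul_neg]

variable [TopologicalSpace 𝕜] [IsTopologicalRing 𝕜] [TopologicalSpace R]
  [IsTopologicalAddGroup R] [ContinuousSMul 𝕜 R]

theorem hasSum_smul_pow_of_pow_succ_eq_neg (hA : A ^ (n + 1) = -A ^ n) {c : ℕ → 𝕜} {s : 𝕜}
    (hc : HasSum (fun k ↦ (-1) ^ k * c k) s) :
    HasSum (fun k ↦ c k • A ^ k)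
      (∑ k ∈ range n, c k • A ^ k + ((-1) ^ n * (s - ∑ k ∈ range n, (-1) ^ k * c k)) • A ^ n) := by
  rw [← hasSum_nat_add_iff' n, add_sub_cancel_left]
  have htail := ((hasSum_nat_add_iff' n).2 hc).mul_left ((-1) ^ n)
  refine (htail.smul_const (A ^ n)).congr_fun fun k ↦ ?_
  rw [pow_add_eq_neg_one_pow_smul (𝕜 := 𝕜) hA, smul_smul]
  have hsq : (-1 : 𝕜) ^ n * (-1) ^ n = 1 := by rw [← mul_pow]; simp
  congr 1
  linear_combination -(-1) ^ k * c (k + n) * hsq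

end PowSuccEqNeg

open MeasureTheory Nat Real

theorem Real.Gamma_three_halves : Gamma (3 / 2) = √π / 2 := by
  rw [show (3 / 2 : ℝ) = 1 / 2 + 1 by norm_num, Gamma_add_one (by norm_num), Gamma_one_half_eq]
  ring

theorem Real.hasSum_pow_div_factorial (x : ℝ) : HasSum (fun n ↦ x ^ n / n !) (exp x) := by
  rw [exp_eq_exp_ℝ]
  exact NormedSpace.expSeries_div_hasSum_exp x

theorem integral_one_sub_sq_pow_div_factorial_succ (m : ℕ) :
    (m + 3 / 2 : ℝ) * ∫ u in (0 : ℝ)..1, (1 - u ^ 2) ^ (m + 1) / (m + 1)!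
      = ∫ u in (0 : ℝ)..1, (1 - u ^ 2) ^ m / m ! := by
  have hderiv (u : ℝ) : HasDerivAt (fun u : ℝ ↦ u * (1 - u ^ 2) ^ (m + 1) / (m + 1)!)
      ((2 * m + 3) * ((1 - u ^ 2) ^ (m + 1) / (m + 1)!) - 2 * ((1 - u ^ 2) ^ m / m !)) u := by
    refine (((hasDerivAt_id' u).mul (((hasDerivAt_pow 2 u).const_sub 1).pow (m + 1))).div_const
      ((m + 1)! : ℝ)).congr_deriv ?_
    simp only [factorial_succ, pow_succ, Pi.pow_apply]
    push_cast
    field_simp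
    ring
  have hcont (n : ℕ) : IntervalIntegrable (fun u : ℝ ↦ (1 - u ^ 2) ^ n / n !) volume 0 1 :=
    (by fun_prop : Continuous _).intervalIntegrable 0 1
  have hFTC : ∫ u in (0 : ℝ)..1,
      (2 * m + 3) * ((1 - u ^ 2) ^ (m + 1) / (m + 1)!) - 2 * ((1 - u ^ 2) ^ m / m !) = 0 := by
    rw [intervalIntegral.integral_eq_sub_of_hasDerivAt (fun u _ ↦ hderiv u)
      (((hcont _).const_mul _).sub ((hcont _).const_mul _))]
    simp
  rw [intervalIntegral.integral_sub ((hcont _).const_mul _) ((hcont _).const_mul _),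
    intervalIntegral.integral_const_mul, intervalIntegral.integral_const_mul] at hFTC
  linarith

theorem integral_one_sub_sq_pow_div_factorial (m : ℕ) :
    ∫ u in (0 : ℝ)..1, (1 - u ^ 2) ^ m / m ! = √π / 2 * (Gamma (m + 3 / 2))⁻¹ := by
  induction m with
  | zero =>
    simp only [pow_zero, factorial_zero, cast_one, div_one, intervalIntegral.integral_const,
      sub_zero, smul_eq_mul, mul_one, CharP.cast_eq_zero, zero_add, Gamma_three_halves]
    field_simp
  | succ m ih =>
    have hm : (m + 3 / 2 : ℝ) ≠ 0 := by positivity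
    have hΓ : Gamma (m + 3 / 2) ≠ 0 := (Gamma_pos_of_pos (by positivity)).ne'
    have hrec := integral_one_sub_sq_pow_div_factorial_succ m
    rw [ih] at hrec
    rw [cast_succ, show (m : ℝ) + 1 + 3 / 2 = m + 3 / 2 + 1 by ring, Gamma_add_one hm]
    field_simp at hrec ⊢
    linear_combination hrec

theorem hasSum_integral_one_sub_sq_pow_div_factorial :
    HasSum (fun m : ℕ ↦ ∫ u in (0 : ℝ)..1, (1 - u ^ 2) ^ m / m !)
      (exp 1 * ∫ u in (0 : ℝ)..1, exp (-u ^ 2)) := by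
  rw [← intervalIntegral.integral_const_mul]
  refine intervalIntegral.hasSum_integral_of_dominated_convergence (fun m _ ↦ (m ! : ℝ)⁻¹)
    (fun m ↦ (by fun_prop : Continuous _).aestronglyMeasurable) (fun m ↦ ?_) ?_ ?_ ?_
  · refine .of_forall fun u hu ↦ ?_
    rw [Set.uIoc_of_le zero_le_one] at hu
    have h0 : 0 ≤ 1 - u ^ 2 := by nlinarith [hu.1, hu.2]
    rw [norm_div, norm_pow, Real.norm_of_nonneg h0, RCLike.norm_natCast, div_eq_mul_inv]
    exact mul_le_of_le_one_left (by positivity) (pow_le_one₀ h0 (by nlinarith [hu.1]))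
  · exact .of_forall fun _ _ ↦ by simpa using Real.summable_pow_div_factorial 1
  · exact intervalIntegrable_const
  · refine .of_forall fun u _ ↦ ?_
    rw [← exp_add, ← sub_eq_add_neg]
    exact hasSum_pow_div_factorial _

theorem two_div_sqrt_pi_mul_integral_exp_neg_sq :
    2 / √π * ∫ u in (0 : ℝ)..1, exp (-u ^ 2) = 1 - erfc 1 := by
  have hint : IntegrableOn (fun u : ℝ ↦ exp (-u ^ 2)) (Set.Ioi 0) := by
    simpa using (integrable_exp_neg_mul_sq one_pos).integrableOn
  rw [← intervalIntegral.integral_Ioi_sub_Ioi hint zero_le_one, erfc]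
  have hgauss := integral_gaussian_Ioi 1
  simp only [neg_mul, one_mul, div_one] at hgauss
  rw [hgauss]
  field_simp

theorem hasSum_inv_Gamma_add_three_halves :
    HasSum (fun m : ℕ ↦ (Gamma (m + 3 / 2))⁻¹) (exp 1 * (1 - erfc 1)) := by
  have h := hasSum_integral_one_sub_sq_pow_div_factorial.mul_left (2 / √π)
  rw [← two_div_sqrt_pi_mul_integral_exp_neg_sq, mul_left_comm]
  refine h.congr_fun fun m ↦ ?_
  rw [integral_one_sub_sq_pow_div_factorial]
  field_simp

theorem hasSum_neg_one_pow_mul_inv_Gamma_half_add_one :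
    HasSum (fun k : ℕ ↦ (-1) ^ k * (Gamma (k / 2 + 1))⁻¹) (exp 1 * erfc 1) := by
  have heven : HasSum (fun m : ℕ ↦ (-1) ^ (2 * m) * (Gamma ((2 * m : ℕ) / 2 + 1))⁻¹) (exp 1) := by
    refine (hasSum_pow_div_factorial 1).congr_fun fun m ↦ ?_
    rw [pow_mul, cast_mul, cast_two, mul_div_cancel_left₀ _ two_ne_zero, Gamma_nat_eq_factorial]
    simp [div_eq_inv_mul]
  have hodd : HasSum (fun m : ℕ ↦ (-1) ^ (2 * m + 1) * (Gamma ((2 * m + 1 : ℕ) / 2 + 1))⁻¹)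
      (-(exp 1 * (1 - erfc 1))) := by
    refine hasSum_inv_Gamma_add_three_halves.neg.congr_fun fun m ↦ ?_
    rw [pow_succ, pow_mul, show ((2 * m + 1 : ℕ) : ℝ) / 2 + 1 = m + 3 / 2 by push_cast; ring]
    simp
  convert heven.even_add_odd (f := fun k : ℕ ↦ (-1) ^ k * (Gamma (k / 2 + 1))⁻¹) hodd using 1
  ring

theorem mittagLefflerMatrix_half_one_example :
    mittagLefflerMatrix (1 / 2) 1
      (!![0, 1, 0, 0;
          0, 0, 1, 0;
          0, 0, 0, 1;
          0, 0, 0, -1] : Matrix (Fin 4) (Fin 4) ℂ)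
    = !![1, ((2 / Real.sqrt π : ℝ) : ℂ), 1,
           ((-(Real.exp 1 * erfc 1) - 2 / Real.sqrt π + 2 : ℝ) : ℂ);
         0, 1, ((2 / Real.sqrt π : ℝ) : ℂ),
           ((Real.exp 1 * erfc 1 + 2 / Real.sqrt π - 1 : ℝ) : ℂ);
         0, 0, 1, ((-(Real.exp 1 * erfc 1) + 1 : ℝ) : ℂ);
         0, 0, 0, ((Real.exp 1 * erfc 1 : ℝ) : ℂ)] := by
  set B : Matrix (Fin 4) (Fin 4) ℂ := !![0, 1, 0, 0; 0, 0, 1, 0; 0, 0, 0, 1; 0, 0, 0, -1]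
  have hB2 : B ^ 2 = !![0, 0, 1, 0; 0, 0, 0, 1; 0, 0, 0, -1; 0, 0, 0, 1] := by
    rw [sq]
    ext i j; fin_cases i <;> fin_cases j <;> simp [B, Matrix.mul_apply, Fin.sum_univ_four]
  have hB3 : B ^ 3 = !![0, 0, 0, 1; 0, 0, 0, -1; 0, 0, 0, 1; 0, 0, 0, -1] := by
    rw [pow_succ, hB2]
    ext i j; fin_cases i <;> fin_cases j <;> simp [B, Matrix.mul_apply, Fin.sum_univ_four]
  have hB4 : B ^ (3 + 1) = -B ^ 3 := by
    rw [pow_succ, hB3]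
    ext i j; fin_cases i <;> fin_cases j <;> simp [B, Matrix.mul_apply, Fin.sum_univ_four]
  have hcoef (k : ℕ) :
      (Complex.Gamma (((1 / 2 : ℝ) : ℂ) * k + 1))⁻¹ = ((Gamma (k / 2 + 1))⁻¹ : ℝ) := by
    rw [Complex.ofReal_inv, ← Complex.Gamma_ofReal]
    push_cast
    ring_nf
  have hE : HasSum (fun k : ℕ ↦ (-1) ^ k * (Complex.Gamma (((1 / 2 : ℝ) : ℂ) * k + 1))⁻¹)
      ((exp 1 * erfc 1 : ℝ) : ℂ) := by
    simp_rw [hcoef]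
    exact_mod_cast Complex.hasSum_ofReal.2 hasSum_neg_one_pow_mul_inv_Gamma_half_add_one
  rw [mittagLefflerMatrix, (hasSum_smul_pow_of_pow_succ_eq_neg hB4 hE).tsum_eq]
  have hΓ0 : Gamma ((0 : ℕ) / 2 + 1) = 1 := by simp
  have hΓ1 : Gamma ((1 : ℕ) / 2 + 1) = √π / 2 := by norm_num [Gamma_three_halves]
  have hΓ2 : Gamma ((2 : ℕ) / 2 + 1) = 1 := by norm_num
  simp only [sum_range_succ, sum_range_zero, hcoef, hΓ0, hΓ1, hΓ2, hB2, hB3]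
  ext i j; fin_cases i <;> fin_cases j <;> simp [B] <;> ring
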